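/- Let H ∈ (0,1) and x > 0. Then ∫₀^∞ s^{−2} · exp(−x²/(2 s^{2H})) / √(2π s^{2H}) ds = 2^{1/(2H) − 1} · Γ(1/(2H) + 1/2) / ( x^{1/H + 1} · H · √π ). -/

import Mathlib

/-!
The substitution `u = 1 / s` absorbs the factor `s⁻²` and turns the Gaussian density of variance
`s^{2H}` into `(2π)^{-1/2} u^H exp(-(x²/2) u^{2H})`, whose integral over `(0, ∞)` is the Gamma-type
integral `∫₀^∞ u^q e^{-b u^p} du = b^{-(q+1)/p} Γ((q+1)/p) / p` with `p = 2H`, `q = H`, `b = x²/2`.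
-/

open Real MeasureTheory Set

theorem integral_Ioi_inv_sq_smul_comp_inv {E : Type*} [NormedAddCommGroup E] [NormedSpace ℝ E]
    (g : ℝ → E) : ∫ s in Ioi (0 : ℝ), (s ^ 2)⁻¹ • g s⁻¹ = ∫ u in Ioi (0 : ℝ), g u := by
  rw [← integral_comp_rpow_Ioi g (p := -1) (by norm_num)]
  refine setIntegral_congr_fun measurableSet_Ioi fun s (hs : 0 < s) => ?_
  norm_num [Real.rpow_neg_one, show (-2 : ℝ) = -(2 : ℕ) by norm_num, Real.rpow_neg hs.le]

theorem exp_div_sqrt_two_pi_rpow_eq_inv_rpow {s : ℝ} (hs : 0 < s) (H x : ℝ) :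
    exp (-x ^ 2 / (2 * s ^ (2 * H))) / √(2 * π * s ^ (2 * H))
      = (√(2 * π))⁻¹ * (s⁻¹ ^ H * exp (-(x ^ 2 / 2) * s⁻¹ ^ (2 * H))) := by
  have hsqrt : √(2 * π * s ^ (2 * H)) = √(2 * π) * s ^ H := by
    rw [Real.sqrt_mul (by positivity), mul_comm 2 H, Real.rpow_mul hs.le, Real.rpow_two,
      Real.sqrt_sq (by positivity)]
  rw [hsqrt, Real.inv_rpow hs.le, Real.inv_rpow hs.le]
  field_simp

theorem half_sq_rpow_neg {H x : ℝ} (hH : 0 < H) (hx : 0 < x) :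
    (x ^ 2 / 2) ^ (-(H + 1) / (2 * H)) = 2 ^ (1 / (2 * H) + 1 / 2) / x ^ (1 / H + 1) := by
  rw [Real.div_rpow (by positivity) zero_le_two, ← Real.rpow_natCast x 2, ← Real.rpow_mul hx.le,
    div_eq_mul_inv (x ^ _), ← Real.rpow_neg zero_le_two, div_eq_mul_inv (2 ^ _),
    ← Real.rpow_neg hx.le, mul_comm]
  congr 2 <;> field_simp <;> ring

theorem fbm_cauchy_key_closed_form {H x : ℝ} (hH : 0 < H) (hx : 0 < x) :
    (√(2 * π))⁻¹ * ((x ^ 2 / 2) ^ (-(H + 1) / (2 * H)) * (1 / (2 * H)) * Gamma ((H + 1) / (2 * H)))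
      = 2 ^ (1 / (2 * H) - 1) * Gamma (1 / (2 * H) + 1 / 2) / (x ^ (1 / H + 1) * H * √π) := by
  have hGamma : (H + 1) / (2 * H) = 1 / (2 * H) + 1 / 2 := by field_simp; ring
  have hsqrt : √(2 * π) = 2 ^ (1 / 2 : ℝ) * √π := by
    rw [Real.sqrt_mul zero_le_two, Real.sqrt_eq_rpow]
  have htwo : (2 : ℝ) ^ (1 / (2 * H) + 1 / 2) = 2 ^ (1 / (2 * H) - 1) * 2 ^ (1 / 2 : ℝ) * 2 := by
    rw [show 1 / (2 * H) + 1 / 2 = (1 / (2 * H) - 1) + 1 / 2 + 1 by ring,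
      Real.rpow_add two_pos, Real.rpow_add two_pos, Real.rpow_one]
  rw [half_sq_rpow_neg hH hx, hGamma, hsqrt, htwo]
  field_simp

theorem integral_fbm_cauchy_key (H x : ℝ) (hH : H ∈ Set.Ioo (0 : ℝ) 1) (hx : 0 < x) :
    (∫ s in Set.Ioi (0 : ℝ),
        (s ^ 2)⁻¹ * (Real.exp (-x ^ 2 / (2 * s ^ (2 * H))) / Real.sqrt (2 * π * s ^ (2 * H))))
      = (2 : ℝ) ^ (1 / (2 * H) - 1) * Real.Gamma (1 / (2 * H) + 1 / 2)
          / (x ^ (1 / H + 1) * H * Real.sqrt π) := by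
  have hH0 : 0 < H := hH.1
  calc _ = ∫ s in Ioi (0 : ℝ), (s ^ 2)⁻¹ •
          ((√(2 * π))⁻¹ * (s⁻¹ ^ H * exp (-(x ^ 2 / 2) * s⁻¹ ^ (2 * H)))) :=
        setIntegral_congr_fun measurableSet_Ioi fun s hs => by
          rw [exp_div_sqrt_two_pi_rpow_eq_inv_rpow hs, smul_eq_mul]
    _ = ∫ u in Ioi (0 : ℝ), (√(2 * π))⁻¹ * (u ^ H * exp (-(x ^ 2 / 2) * u ^ (2 * H))) :=
        integral_Ioi_inv_sq_smul_comp_inv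
          fun u => (√(2 * π))⁻¹ * (u ^ H * exp (-(x ^ 2 / 2) * u ^ (2 * H)))
    _ = _ := by
        rw [integral_const_mul,
          integral_rpow_mul_exp_neg_mul_rpow (by positivity) (by linarith) (by positivity),
          fbm_cauchy_key_closed_form hH0 hx]
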